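/- arXiv:1711.05324 — 6 statements merged into one kernel-verified Lean document; each statement's English description precedes it below -/
import Mathlib

section
/- Let S ∈ {0,1}^{m×p} and Δ ∈ {0,1}^{p×m} be binary matrices. The subspace Sparse(S) ⊆ ℝ^{m×p} satisfies L·M·L' ∈ Sparse(S) for all L, L' ∈ Sparse(S) and all M ∈ Sparse(Δ), if and only if S·Δ·S ≤ S (Boolean product, entrywise order). -/
/-
Sufficiency: the support of a product of matrices is contained in the Boolean product of the
supports, so `L * M * L'` is supported in `S·Δ·S ≤ S`.
Necessity: take `L = L'` and `M` the 0/1 indicator matrices of `S` and `Δ`. Products of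
entrywise nonnegative matrices have no cancellation, so the support of `L * M * L` is exactly
`S·Δ·S`, which must then lie below `S`.
-/

open Matrix Pointwise

/-- Boolean matrix product: (X·Z)(i,j) = 1 iff ∃ k, X(i,k)=1 ∧ Z(k,j)=1. -/
def bmul {α β γ : Type} [Fintype β] (X : Matrix α β Bool) (Z : Matrix β γ Bool) :
    Matrix α γ Bool :=
  fun i j => decide (∃ k, X i k = true ∧ Z k j = true)

/-- Entrywise order on binary matrices. -/
def ble {α β : Type} (X Y : Matrix α β Bool) : Prop :=
  ∀ i j, X i j = true → Y i j = true

/-- Support pattern of a real matrix. -/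
noncomputable def struct {α β : Type} (Y : Matrix α β ℝ) : Matrix α β Bool :=
  fun i j => decide (Y i j ≠ 0)

/-- Sparsity subspace of a binary matrix. -/
def sparse {α β : Type} (X : Matrix α β Bool) : Set (Matrix α β ℝ) :=
  {Y | ∀ i j, X i j = false → Y i j = 0}

/-- Boolean matrix power. -/
def bpow {α : Type} [Fintype α] [DecidableEq α] (Z : Matrix α α Bool) :
    ℕ → Matrix α α Bool
  | 0 => fun i j => decide (i = j)
  | k + 1 => bmul (bpow Z k) Z

section

variable {α β γ : Type}

theorem mem_sparse_iff {X : Matrix α β Bool} {Y : Matrix α β ℝ} :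
    Y ∈ sparse X ↔ ble (struct Y) X := by
  refine forall₂_congr fun i j => ?_
  cases X i j <;> simp [struct]

theorem sparse_mono {X Y : Matrix α β Bool} (h : ble X Y) : sparse X ⊆ sparse Y := by
  intro A hA i j hYij
  cases hXij : X i j
  · exact hA i j hXij
  · simp [h i j hXij] at hYij

theorem mul_mem_sparse_bmul [Fintype β] {X : Matrix α β Bool} {Z : Matrix β γ Bool}
    {A : Matrix α β ℝ} {B : Matrix β γ ℝ} (hA : A ∈ sparse X) (hB : B ∈ sparse Z) :
    A * B ∈ sparse (bmul X Z) := by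
  intro i j hXZ
  simp only [bmul, decide_eq_false_iff_not, not_exists, not_and] at hXZ
  rw [mul_apply]
  refine Finset.sum_eq_zero fun k _ => ?_
  cases hXik : X i k
  · rw [hA i k hXik, zero_mul]
  · rw [hB k j (Bool.not_eq_true _ |>.mp (hXZ k hXik)), mul_zero]

def EntrywiseNonneg (A : Matrix α β ℝ) : Prop :=
  ∀ i j, 0 ≤ A i j

theorem EntrywiseNonneg.mul [Fintype β] {A : Matrix α β ℝ} {B : Matrix β γ ℝ}
    (hA : EntrywiseNonneg A) (hB : EntrywiseNonneg B) : EntrywiseNonneg (A * B) :=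
  fun _ _ => Finset.sum_nonneg fun _ _ => mul_nonneg (hA _ _) (hB _ _)

theorem struct_mul_of_entrywiseNonneg [Fintype β] {A : Matrix α β ℝ} {B : Matrix β γ ℝ}
    (hA : EntrywiseNonneg A) (hB : EntrywiseNonneg B) :
    struct (A * B) = bmul (struct A) (struct B) := by
  ext i j
  simp only [struct, bmul, decide_eq_true_eq, mul_apply, ne_eq,
    Finset.sum_eq_zero_iff_of_nonneg fun k _ => mul_nonneg (hA i k) (hB k j),
    Finset.mem_univ, true_implies, not_forall, mul_eq_zero, not_or]

def boolIndicator (X : Matrix α β Bool) : Matrix α β ℝ :=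
  fun i j => if X i j then 1 else 0

theorem entrywiseNonneg_boolIndicator (X : Matrix α β Bool) :
    EntrywiseNonneg (boolIndicator X) := by
  intro i j
  unfold boolIndicator
  split <;> norm_num

theorem struct_boolIndicator (X : Matrix α β Bool) : struct (boolIndicator X) = X := by
  ext i j
  cases h : X i j <;> simp [struct, boolIndicator, h]

theorem boolIndicator_mem_sparse (X : Matrix α β Bool) : boolIndicator X ∈ sparse X :=
  mem_sparse_iff.2 fun i j h => by rwa [struct_boolIndicator] at h

end

theorem stmt3 {m p : ℕ} (S : Matrix (Fin m) (Fin p) Bool) (Δ : Matrix (Fin p) (Fin m) Bool) :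
    (∀ L ∈ sparse S, ∀ L' ∈ sparse S, ∀ M ∈ sparse Δ, L * M * L' ∈ sparse S) ↔
      ble (bmul (bmul S Δ) S) S := by
  constructor
  · intro h
    have hS := entrywiseNonneg_boolIndicator S
    have hΔ := entrywiseNonneg_boolIndicator Δ
    have hmem := h _ (boolIndicator_mem_sparse S) _ (boolIndicator_mem_sparse S) _
      (boolIndicator_mem_sparse Δ)
    rwa [mem_sparse_iff, struct_mul_of_entrywiseNonneg (hS.mul hΔ) hS,
      struct_mul_of_entrywiseNonneg hS hΔ, struct_boolIndicator, struct_boolIndicator] at hmem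
  · intro h L hL L' hL' M hM
    exact sparse_mono h (mul_mem_sparse_bmul (mul_mem_sparse_bmul hL hM) hL')
end

section
/- Let 𝒮 ⊆ ℝ^{m×p} be a sparsity subspace (𝒮 = Sparse(S) for some binary matrix S, restricted to block lower triangular matrices) and let Y ∈ ℝ^{p×m} be such that YX is nilpotent for every X ∈ 𝒮. If 𝒮 is quadratically invariant with respect to Y, i.e., L·Y·L' ∈ 𝒮 for all L, L' ∈ 𝒮, then for every L ∈ 𝒮, h(L, Y) = -L(I - YL)^{-1} ∈ -𝒮; in particular h(𝒮, Y) ⊆ -𝒮. -/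
open Matrix Pointwise

/-! Since `Y * L` is nilpotent, `(1 - Y * L)⁻¹` is the finite geometric series
`∑ₖ (Y * L) ^ k`, so `L * (1 - Y * L)⁻¹ = ∑ₖ L * (Y * L) ^ k`. Quadratic invariance gives
`L * (Y * L) ^ (k + 1) = (L * (Y * L) ^ k) * Y * L ∈ 𝒮` inductively, and `𝒮` is closed
under sums. -/

theorem sum_mem_sparse {α β γ : Type} {S : Matrix α β Bool} {s : Finset γ}
    {f : γ → Matrix α β ℝ} (h : ∀ c ∈ s, f c ∈ sparse S) : ∑ c ∈ s, f c ∈ sparse S :=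
  fun i j hij => by
    rw [Matrix.sum_apply]
    exact Finset.sum_eq_zero fun c hc => h c hc i j hij

theorem Matrix.inv_one_sub_eq_geom_sum {n R : Type*} [Fintype n] [DecidableEq n] [CommRing R]
    {A : Matrix n n R} {k : ℕ} (hA : A ^ k = 0) :
    (1 - A)⁻¹ = ∑ i ∈ Finset.range k, A ^ i :=
  inv_eq_right_inv <| by rw [mul_neg_geom_sum, hA, sub_zero]

theorem mul_pow_mul_mem_sparse {α β : Type} [Fintype α] [Fintype β] [DecidableEq β]
    {S : Matrix α β Bool} {Y : Matrix β α ℝ}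
    (hQI : ∀ L ∈ sparse S, ∀ L' ∈ sparse S, L * Y * L' ∈ sparse S)
    {L : Matrix α β ℝ} (hL : L ∈ sparse S) (k : ℕ) : L * (Y * L) ^ k ∈ sparse S := by
  induction k with
  | zero => simpa using hL
  | succ k ih =>
    rw [pow_succ, ← Matrix.mul_assoc, ← Matrix.mul_assoc]
    exact hQI _ ih _ hL

theorem stmt6 {m p : ℕ} (Sb : Matrix (Fin m) (Fin p) Bool) (Y : Matrix (Fin p) (Fin m) ℝ)
    (hnil : ∀ X ∈ sparse Sb, IsNilpotent (Y * X))
    (hQI : ∀ L ∈ sparse Sb, ∀ L' ∈ sparse Sb, L * Y * L' ∈ sparse Sb) :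
    ∀ L ∈ sparse Sb, -(L * (1 - Y * L)⁻¹) ∈ -(sparse Sb) := by
  intro L hL
  obtain ⟨k, hk⟩ := hnil L hL
  rw [Set.neg_mem_neg, Matrix.inv_one_sub_eq_geom_sum hk, Matrix.mul_sum]
  exact sum_mem_sparse fun i _ => mul_pow_mul_mem_sparse hQI hL i
end

section
/- Let S ∈ {0,1}^{m×p} and Δ_g = Struct(C·A^g·B) for a system (A,B,C) with A ∈ ℝ^{n×n}. If S·Δ_g·S ≤ S for all g ∈ [0, n-1], then S·Δ_v·S ≤ S for all natural numbers v. -/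
open Matrix Pointwise

/-!
By Cayley–Hamilton, `A ^ v` is a real linear combination of `A ^ 0, …, A ^ (n - 1)`, hence so is
`C * A ^ v * B` of the `C * A ^ g * B`. An entry of a linear combination can only be nonzero where
one of the summands is, so `Δ_v` is dominated by the Boolean sum of `Δ_0, …, Δ_(n-1)`, and the
bound `S Δ_g S ≤ S` passes to `Δ_v` because Boolean matrix multiplication is monotone.
-/

open Polynomial

namespace Matrix

variable {ι : Type*} [Fintype ι] [DecidableEq ι] {R : Type*} [CommRing R] [Nontrivial R]

theorem pow_mem_span_pow_lt_card (M : Matrix ι ι R) (v : ℕ) :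
    M ^ v ∈ Submodule.span R (Set.range fun i : Fin (Fintype.card ι) => M ^ (i : ℕ)) :=
  PowerBasis.mem_span_pow'.mpr ⟨X ^ v %ₘ M.charpoly,
    (degree_modByMonic_lt _ M.charpoly_monic).trans_eq M.charpoly_degree_eq_dim,
    M.pow_eq_aeval_mod_charpoly v⟩

theorem mul_pow_mul_mem_span {κ μ : Type*} [Fintype μ] (C : Matrix κ ι R) (M : Matrix ι ι R)
    (B : Matrix ι μ R) (v : ℕ) :
    C * M ^ v * B ∈
      Submodule.span R (Set.range fun i : Fin (Fintype.card ι) => C * M ^ (i : ℕ) * B) := by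
  have := Submodule.apply_mem_span_image_of_mem_span
    ((mulRightLinearMap κ R B).comp (mulLeftLinearMap ι R C)) (pow_mem_span_pow_lt_card M v)
  rwa [← Set.range_comp] at this

end Matrix

theorem exists_apply_ne_zero_of_mem_span {κ α β R : Type*} [Semiring R] {Y : Matrix α β R}
    {Ys : κ → Matrix α β R} (hY : Y ∈ Submodule.span R (Set.range Ys)) {i : α} {j : β}
    (hij : Y i j ≠ 0) : ∃ g, Ys g i j ≠ 0 := by
  by_contra! hzero
  have hker : Submodule.span R (Set.range Ys) ≤ LinearMap.ker (entryLinearMap R R i j) :=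
    Submodule.span_le.mpr (Set.range_subset_iff.mpr hzero)
  exact hij (hker hY)

theorem exists_struct_apply_of_mem_span {κ α β : Type} {Y : Matrix α β ℝ} {Ys : κ → Matrix α β ℝ}
    (hY : Y ∈ Submodule.span ℝ (Set.range Ys)) :
    ∀ i j, struct Y i j = true → ∃ g, struct (Ys g) i j = true := by
  simpa only [struct, decide_eq_true_eq] using fun i j => exists_apply_ne_zero_of_mem_span hY

theorem ble_bmul_bmul_of_forall_exists {κ α β γ δ : Type} [Fintype β] [Fintype γ]
    (S : Matrix α β Bool) (T : Matrix γ δ Bool) (U : Matrix α δ Bool) {X : Matrix β γ Bool}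
    {Xs : κ → Matrix β γ Bool} (hX : ∀ i j, X i j = true → ∃ g, Xs g i j = true)
    (hXs : ∀ g, ble (bmul (bmul S (Xs g)) T) U) : ble (bmul (bmul S X) T) U := by
  simp only [ble, bmul, decide_eq_true_eq] at hXs ⊢
  rintro i j ⟨k, ⟨l, hil, hlk⟩, hkj⟩
  obtain ⟨g, hg⟩ := hX l k hlk
  exact hXs g i j ⟨k, ⟨l, hil, hg⟩, hkj⟩

theorem stmt11 {n m p : ℕ} (A : Matrix (Fin n) (Fin n) ℝ) (B : Matrix (Fin n) (Fin m) ℝ)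
    (C : Matrix (Fin p) (Fin n) ℝ) (S : Matrix (Fin m) (Fin p) Bool)
    (h : ∀ g, g < n → ble (bmul (bmul S (struct (C * A ^ g * B))) S) S) :
    ∀ v : ℕ, ble (bmul (bmul S (struct (C * A ^ v * B))) S) S := fun v =>
  ble_bmul_bmul_of_forall_exists S S S (exists_struct_apply_of_mem_span (mul_pow_mul_mem_span C A B v))
    fun g => h g (g.2.trans_eq (Fintype.card_fin n))
end

section
/- Let S ∈ {0,1}^{m×p}, Z ∈ {0,1}^{m×m} with Z ≥ I_m, and binary matrices Δ_g for g ≥ 0. Suppose S·Δ_g·Z^r·S ≤ Z^{g+r+1}·S for all g, r ≥ 0 (Boolean products, entrywise order). Then for all k ∈ [1, N-1], j ∈ [0, k-1], h ∈ [j+1, k], g ∈ [0, h-j-1], setting S_{a,b} = Z^{a-b}·S, the inequality S_{k,h}·Δ_g·S_{h-g-1,j} ≤ S_{k,j} holds. -/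
open Matrix Pointwise

theorem bmul_assoc {α β γ δ : Type} [Fintype β] [Fintype γ]
    (X : Matrix α β Bool) (Y : Matrix β γ Bool) (W : Matrix γ δ Bool) :
    bmul (bmul X Y) W = bmul X (bmul Y W) := by
  funext i j
  simp only [bmul, decide_eq_true_iff]
  congr 1
  simp only [decide_eq_true_iff]
  exact propext ⟨fun ⟨c, ⟨b, hXb, hYb⟩, hW⟩ => ⟨b, hXb, c, hYb, hW⟩,
    fun ⟨b, hXb, c, hYb, hW⟩ => ⟨c, ⟨b, hXb, hYb⟩, hW⟩⟩

theorem bmul_bpow_zero {α β : Type} [Fintype β] [DecidableEq β]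
    (X : Matrix α β Bool) (Z : Matrix β β Bool) : bmul X (bpow Z 0) = X := by
  funext i j
  simp [bmul, bpow]

theorem bmul_ble_bmul_left {α β γ : Type} [Fintype β] (W : Matrix α β Bool)
    {X Y : Matrix β γ Bool} (hXY : ble X Y) : ble (bmul W X) (bmul W Y) := by
  intro i j hWX
  simp only [bmul, decide_eq_true_iff] at hWX ⊢
  obtain ⟨b, hW, hX⟩ := hWX
  exact ⟨b, hW, hXY _ _ hX⟩

theorem bpow_add {α : Type} [Fintype α] [DecidableEq α] (Z : Matrix α α Bool) (a b : ℕ) :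
    bpow Z (a + b) = bmul (bpow Z a) (bpow Z b) := by
  induction b with
  | zero => rw [Nat.add_zero, bmul_bpow_zero]
  | succ b ih => rw [← Nat.add_assoc, bpow, bpow, ih, bmul_assoc]

theorem stmt14_general {m p : ℕ} (N : ℕ) (S : Matrix (Fin m) (Fin p) Bool)
    (Z : Matrix (Fin m) (Fin m) Bool)
    (Δ : ℕ → Matrix (Fin p) (Fin m) Bool)
    (h : ∀ g r : ℕ, ble (bmul (bmul (bmul S (Δ g)) (bpow Z r)) S) (bmul (bpow Z (g + r + 1)) S)) :
    ∀ k j h' g : ℕ, 1 ≤ k → k < N → j < k → j + 1 ≤ h' → h' ≤ k → g + j + 1 ≤ h' →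
      ble (bmul (bmul (bmul (bpow Z (k - h')) S) (Δ g)) (bmul (bpow Z (h' - g - 1 - j)) S))
        (bmul (bpow Z (k - j)) S) := by
  intro k j h' g _ _ _ _ hh'k hgh'
  have hexp : k - h' + (g + (h' - g - 1 - j) + 1) = k - j := by omega
  have key := bmul_ble_bmul_left (bpow Z (k - h')) (h g (h' - g - 1 - j))
  rw [← bmul_assoc (bpow Z _) (bpow Z _), ← bpow_add, hexp] at key
  simpa only [bmul_assoc] using key

theorem stmt14 {m p : ℕ} (N : ℕ) (S : Matrix (Fin m) (Fin p) Bool)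
    (Z : Matrix (Fin m) (Fin m) Bool) (hdiag : ∀ i, Z i i = true)
    (Δ : ℕ → Matrix (Fin p) (Fin m) Bool)
    (h : ∀ g r : ℕ, ble (bmul (bmul (bmul S (Δ g)) (bpow Z r)) S) (bmul (bpow Z (g + r + 1)) S)) :
    ∀ k j h' g : ℕ, 1 ≤ k → k < N → j < k → j + 1 ≤ h' → h' ≤ k → g + j + 1 ≤ h' →
      ble (bmul (bmul (bmul (bpow Z (k - h')) S) (Δ g)) (bmul (bpow Z (h' - g - 1 - j)) S))
        (bmul (bpow Z (k - j)) S) :=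
  stmt14_general N S Z Δ h
end

section
/- Let S ∈ {0,1}^{m×p}, M ∈ ℝ^{p×m}, and suppose S·Struct(M)·S ≰ S, i.e., there exist indices a, b with (S·Struct(M)·S)(a,b) = 1 but S(a,b) = 0. Then there exist real matrices L, L' ∈ Sparse(S) such that L·M·L' ∉ Sparse(S). -/
/-! Matrix units suffice: if `S a c = S k b = 1` and `M c k ≠ 0`, then
`E_{ac} * M * E_{kb} = M c k • E_{ab}`, which is nonzero at the position `(a, b)` forbidden by `S`. -/

open Matrix Pointwise

section

variable {α β γ : Type}

lemma bmul_apply_eq_true [Fintype β] {X : Matrix α β Bool} {Z : Matrix β γ Bool} {i : α} {j : γ} :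
    bmul X Z i j = true ↔ ∃ k, X i k = true ∧ Z k j = true :=
  decide_eq_true_iff

lemma struct_apply_eq_true {Y : Matrix α β ℝ} {i : α} {j : β} :
    struct Y i j = true ↔ Y i j ≠ 0 :=
  decide_eq_true_iff

lemma single_mem_sparse [DecidableEq α] [DecidableEq β] {X : Matrix α β Bool} {i : α} {j : β}
    (hX : X i j = true) (r : ℝ) : single i j r ∈ sparse X := by
  intro i' j' hX'
  apply single_apply_of_ne
  rintro ⟨rfl, rfl⟩
  simp_all

end

theorem stmt16 {m p : ℕ} (S : Matrix (Fin m) (Fin p) Bool) (M : Matrix (Fin p) (Fin m) ℝ)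
    (a : Fin m) (b : Fin p)
    (h1 : bmul (bmul S (struct M)) S a b = true) (h2 : S a b = false) :
    ∃ L L' : Matrix (Fin m) (Fin p) ℝ,
      L ∈ sparse S ∧ L' ∈ sparse S ∧ L * M * L' ∉ sparse S := by
  obtain ⟨k, hak, hkb⟩ := bmul_apply_eq_true.1 h1
  obtain ⟨c, hac, hck⟩ := bmul_apply_eq_true.1 hak
  refine ⟨single a c 1, single k b 1, single_mem_sparse hac 1, single_mem_sparse hkb 1,
    fun hmem => ?_⟩
  have hentry : (single a c (1 : ℝ) * M * single k b (1 : ℝ)) a b = M c k := by simp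
  exact struct_apply_eq_true.1 hck (hentry ▸ hmem a b h2)
end

section
/- Let 𝒮 be a subspace of ℝ^{m×p} and Y ∈ ℝ^{p×m} such that Y·X is nilpotent for every X ∈ 𝒮, and let h(X,Y) = -X(I - YX)^{-1}. If h(𝒮, Y) := {h(X,Y) : X ∈ 𝒮} is a convex set, then h(𝒮, Y) = -𝒮. -/
open Matrix Pointwise

/-!
Write `h X = -X (1 - Y X)⁻¹`. Whenever `1 - Y X` is invertible, `1 - Y (h X) = (1 - Y X)⁻¹`, so
`h` is an involution, and more generally `h (c • h X) = c • X (1 - (1 - c) Y X)⁻¹`.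
Since `h 0 = 0`, convexity of `h(𝒮)` puts `½ • h (2X)` into `h(𝒮)` for `X ∈ 𝒮`, say equal to `h W`;
applying `h` gives `W = X (1 - Y X)⁻¹ = -h X`. Hence `h(𝒮) ⊆ 𝒮`, and the involution gives
`𝒮 = h(h(𝒮)) ⊆ h(𝒮)`. Finally `-𝒮 = 𝒮` because `𝒮` is a subspace.
-/

open Set

section ClosedLoop

variable {m n R : Type*} [Fintype m] [Fintype n] [DecidableEq n] [CommRing R]

noncomputable def closedLoop (Y : Matrix n m R) (X : Matrix m n R) : Matrix m n R :=
  -(X * (1 - Y * X)⁻¹)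

variable {Y : Matrix n m R} {X : Matrix m n R}

@[simp]
lemma closedLoop_zero : closedLoop Y (0 : Matrix m n R) = 0 := by
  simp [closedLoop]

lemma mul_closedLoop (hX : IsUnit (1 - Y * X)) :
    Y * closedLoop Y X = 1 - (1 - Y * X)⁻¹ := by
  have hdet := (isUnit_iff_isUnit_det _).mp hX
  rw [closedLoop, Matrix.mul_neg, ← Matrix.mul_assoc]
  nth_rewrite 1 [show Y * X = 1 - (1 - Y * X) by abel]
  rw [sub_mul, Matrix.one_mul, mul_nonsing_inv _ hdet]
  abel

lemma one_sub_mul_closedLoop (hX : IsUnit (1 - Y * X)) :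
    1 - Y * closedLoop Y X = (1 - Y * X)⁻¹ := by
  rw [mul_closedLoop hX, sub_sub_cancel]

lemma closedLoop_closedLoop (hX : IsUnit (1 - Y * X)) :
    closedLoop Y (closedLoop Y X) = X := by
  have hdet := (isUnit_iff_isUnit_det _).mp hX
  rw [closedLoop, one_sub_mul_closedLoop hX, nonsing_inv_nonsing_inv _ hdet, closedLoop,
    Matrix.neg_mul, neg_neg, nonsing_inv_mul_cancel_right _ _ hdet]

lemma closedLoop_smul_closedLoop (hX : IsUnit (1 - Y * X)) (c : R) :
    closedLoop Y (c • closedLoop Y X) = c • (X * (1 - (1 - c) • (Y * X))⁻¹) := by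
  set A := 1 - Y * X with hA
  have hdet := (isUnit_iff_isUnit_det _).mp hX
  have hYX : Y * X = 1 - A := by rw [hA, sub_sub_cancel]
  have hfactor : 1 - Y * (c • closedLoop Y X) = (1 - (1 - c) • (Y * X)) * A⁻¹ := by
    rw [Matrix.mul_smul, mul_closedLoop hX, ← hA, hYX, sub_mul, Matrix.one_mul, Matrix.smul_mul,
      sub_mul, Matrix.one_mul, mul_nonsing_inv _ hdet]
    module
  rw [closedLoop, hfactor, Matrix.mul_inv_rev, nonsing_inv_nonsing_inv _ hdet, closedLoop,
    smul_neg, Matrix.neg_mul, neg_neg, Matrix.smul_mul, ← Matrix.mul_assoc,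
    nonsing_inv_mul_cancel_right _ _ hdet]

end ClosedLoop

section Convex

variable {m n 𝕜 : Type*} [Fintype m] [Fintype n] [DecidableEq n] [Field 𝕜] [LinearOrder 𝕜]
  [IsStrictOrderedRing 𝕜] {𝒮 : Submodule 𝕜 (Matrix m n 𝕜)} {Y : Matrix n m 𝕜}

lemma closedLoop_mem_of_convex_image (hunit : ∀ X ∈ 𝒮, IsUnit (1 - Y * X))
    (hconv : Convex 𝕜 (closedLoop Y '' 𝒮)) {X : Matrix m n 𝕜} (hX : X ∈ 𝒮) :
    closedLoop Y X ∈ 𝒮 := by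
  have h2X : (2 : 𝕜) • X ∈ 𝒮 := 𝒮.smul_mem 2 hX
  obtain ⟨W, hW, hW_image⟩ : (2⁻¹ : 𝕜) • closedLoop Y ((2 : 𝕜) • X) ∈ closedLoop Y '' 𝒮 :=
    hconv.smul_mem_of_zero_mem ⟨0, 𝒮.zero_mem, closedLoop_zero⟩ (mem_image_of_mem _ h2X)
      ⟨by norm_num, by norm_num⟩
  have hhalf : (1 - (2⁻¹ : 𝕜)) • (Y * ((2 : 𝕜) • X)) = Y * X := by
    rw [Matrix.mul_smul, smul_smul]
    norm_num
  have hW_eq : W = X * (1 - Y * X)⁻¹ := by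
    rw [← closedLoop_closedLoop (hunit W hW), hW_image,
      closedLoop_smul_closedLoop (hunit _ h2X), hhalf, Matrix.smul_mul, smul_smul]
    norm_num
  rw [closedLoop, ← hW_eq]
  exact 𝒮.neg_mem hW

lemma closedLoop_image_eq_of_convex (hunit : ∀ X ∈ 𝒮, IsUnit (1 - Y * X))
    (hconv : Convex 𝕜 (closedLoop Y '' 𝒮)) :
    closedLoop Y '' 𝒮 = 𝒮 :=
  Subset.antisymm (image_subset_iff.mpr fun _ hX => closedLoop_mem_of_convex_image hunit hconv hX)
    fun Z hZ => ⟨closedLoop Y Z, closedLoop_mem_of_convex_image hunit hconv hZ,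
      closedLoop_closedLoop (hunit Z hZ)⟩

end Convex

theorem stmt18 {m p : ℕ} (𝒮 : Submodule ℝ (Matrix (Fin m) (Fin p) ℝ))
    (Y : Matrix (Fin p) (Fin m) ℝ)
    (hnil : ∀ X ∈ 𝒮, IsNilpotent (Y * X))
    (hconv : Convex ℝ ((fun X : Matrix (Fin m) (Fin p) ℝ => -(X * (1 - Y * X)⁻¹)) ''
      (𝒮 : Set (Matrix (Fin m) (Fin p) ℝ)))) :
    (fun X : Matrix (Fin m) (Fin p) ℝ => -(X * (1 - Y * X)⁻¹)) ''
      (𝒮 : Set (Matrix (Fin m) (Fin p) ℝ)) = -(𝒮 : Set (Matrix (Fin m) (Fin p) ℝ)) := by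
  rw [Submodule.neg_coe]
  exact closedLoop_image_eq_of_convex (fun X hX => (hnil X hX).isUnit_one_sub) hconv
end
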